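/- arXiv:hep-ph/9507457 — 7 statements merged into one kernel-verified Lean document; each statement's English description precedes it below -/
import Mathlib

section
/- Let V be a nonzero finite-dimensional real inner product space and ρ a representation of a group G on V such that the only ρ-invariant subspaces of V are 0 and V. If T : V → V is a self-adjoint linear map (⟪T v, w⟫ = ⟪v, T w⟫ for all v, w) with T ∘ ρ(g) = ρ(g) ∘ T for all g ∈ G, then there exists c ∈ ℝ with T = c · id_V. -/
open scoped RealInnerProductSpace

namespace Module.End

variable {K V : Type*} [Field K] [AddCommGroup V] [Module K V]

theorem eq_smul_id_of_eigenspace_eq_top {T : End K V} {c : K} (h : T.eigenspace c = ⊤) :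
    T = c • LinearMap.id := by
  rw [eigenspace_def, LinearMap.ker_eq_top, sub_eq_zero] at h
  simpa [Module.End.one_eq_id] using h

theorem apply_mem_eigenspace_of_commute {T S : End K V} (hTS : Commute T S) {c : K} {u : V}
    (hu : u ∈ T.eigenspace c) : S u ∈ T.eigenspace c := by
  rw [mem_eigenspace_iff] at hu ⊢
  rw [← Module.End.mul_apply, hTS.eq, Module.End.mul_apply, hu, map_smul]

end Module.End

namespace Representation

variable {K G V : Type*} [Field K] [Monoid G] [AddCommGroup V] [Module K V]

/-- Schur's lemma without algebraic closedness: the eigenspace of `c` is a nonzero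
subrepresentation, hence everything. -/
theorem eq_smul_id_of_hasEigenvalue (ρ : Representation K G V)
    (hirr : ∀ U : Submodule K V, (∀ g : G, ∀ u ∈ U, ρ g u ∈ U) → U = ⊥ ∨ U = ⊤)
    {T : Module.End K V} (hcomm : ∀ g : G, T ∘ₗ ρ g = ρ g ∘ₗ T) {c : K}
    (hc : T.HasEigenvalue c) : T = c • LinearMap.id := by
  have hinv (g : G) (u : V) (hu : u ∈ T.eigenspace c) : ρ g u ∈ T.eigenspace c :=
    Module.End.apply_mem_eigenspace_of_commute (hcomm g) hu
  rcases hirr _ hinv with hbot | htop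
  · exact absurd hbot hc
  · exact Module.End.eq_smul_id_of_eigenspace_eq_top htop

end Representation

/-- Schur's lemma for self-adjoint intertwiners.  Let `V` be a nonzero
finite-dimensional real inner product space and `ρ` an irreducible representation of a group
`G` on `V`.  If `T : V → V` is linear, self-adjoint, and commutes with every `ρ g`,
then `T = c • id` for some real `c`. -/
theorem selfAdjoint_commutant_is_scalar
    {G V : Type*} [Group G] [NormedAddCommGroup V] [InnerProductSpace ℝ V]
    [FiniteDimensional ℝ V] [Nontrivial V]
    (ρ : Representation ℝ G V)
    (hirr : ∀ U : Submodule ℝ V, (∀ g : G, ∀ u ∈ U, ρ g u ∈ U) → U = ⊥ ∨ U = ⊤)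
    (T : V →ₗ[ℝ] V)
    (hsa : ∀ v w : V, ⟪T v, w⟫ = ⟪v, T w⟫)
    (hcomm : ∀ g : G, T ∘ₗ ρ g = ρ g ∘ₗ T) :
    ∃ c : ℝ, T = c • (LinearMap.id : V →ₗ[ℝ] V) := by
  have hsym : T.IsSymmetric := hsa
  exact ⟨_, ρ.eq_smul_id_of_hasEigenvalue hirr hcomm hsym.hasEigenvalue_iSup_of_finiteDimensional⟩
end

section
/- Let V be a nonzero finite-dimensional real inner product space and ρ an orthogonal representation of a group G on V that is irreducible. If B : V × V → ℝ is a symmetric bilinear form with B(ρ(g)x, ρ(g)y) = B(x, y) for all g ∈ G and x, y ∈ V, then there exists c ∈ ℝ such that B(x, y) = c · ⟪x, y⟫ for all x, y ∈ V. -/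
open scoped RealInnerProductSpace

/-!
Riesz representation turns `B` into an operator `T` with `⟪T x, y⟫ = B x y`; `T` is self-adjoint
because `B` is symmetric, and it commutes with every `ρ g` because both `B` and the inner product
are invariant. A self-adjoint operator on a nonzero finite-dimensional real space has a real
eigenvalue `c`, and its eigenspace is a nonzero invariant subspace, hence all of `V`
(Schur's lemma).
-/

theorem Representation.apply_eq_smul_of_commute_of_hasEigenvalue {k G V : Type*} [CommRing k]
    [Monoid G] [AddCommGroup V] [Module k V] (ρ : Representation k G V)
    (hirr : ∀ U : Submodule k V, (∀ g : G, ∀ u ∈ U, ρ g u ∈ U) → U = ⊥ ∨ U = ⊤)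
    {T : Module.End k V} (hcomm : ∀ g, Commute T (ρ g)) {μ : k} (hμ : T.HasEigenvalue μ)
    (x : V) : T x = μ • x := by
  have hstable : ∀ g, ∀ u ∈ T.eigenspace μ, ρ g u ∈ T.eigenspace μ := fun g _ hu ↦
    Module.End.mapsTo_genEigenspace_of_comm (hcomm g) μ 1 hu
  have htop : T.eigenspace μ = ⊤ := (hirr _ hstable).resolve_left hμ
  exact Module.End.mem_eigenspace_iff.mp (htop ▸ Submodule.mem_top)

section InnerProductSpace

variable {G V : Type*} [NormedAddCommGroup V] [InnerProductSpace ℝ V]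

theorem LinearMap.exists_inner_apply_eq [FiniteDimensional ℝ V]
    (B : V →ₗ[ℝ] V →ₗ[ℝ] ℝ) : ∃ T : V →ₗ[ℝ] V, ∀ x y, ⟪T x, y⟫ = B x y :=
  ⟨{ toFun x := (InnerProductSpace.toDual ℝ V).symm (B x).toContinuousLinearMap
     map_add' x y := by simp only [map_add]
     map_smul' c x := by simp only [map_smul, RingHom.id_apply] },
   fun x y ↦ by simp [InnerProductSpace.toDual_symm_apply]⟩

theorem Representation.commute_of_inner_invariant [Group G] (ρ : Representation ℝ G V)
    (horth : ∀ (g : G) (v w : V), ⟪ρ g v, ρ g w⟫ = ⟪v, w⟫) {T : Module.End ℝ V}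
    (hT : ∀ (g : G) (x y : V), ⟪T (ρ g x), ρ g y⟫ = ⟪T x, y⟫) (g : G) :
    Commute T (ρ g) := by
  refine LinearMap.ext fun x ↦ ext_inner_right ℝ fun y ↦ ?_
  rw [← ρ.self_inv_apply g y, Module.End.mul_apply, Module.End.mul_apply, hT, horth]

end InnerProductSpace

/-- Let `V` be a nonzero finite-dimensional real inner product space and `ρ`
an orthogonal irreducible representation of a group `G` on `V`.  Any `G`-invariant symmetric
bilinear form `B` on `V` is a real multiple of the inner product. -/
theorem invariant_symmetric_bilinear_is_multiple_of_inner
    {G V : Type*} [Group G] [NormedAddCommGroup V] [InnerProductSpace ℝ V]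
    [FiniteDimensional ℝ V] [Nontrivial V]
    (ρ : Representation ℝ G V)
    (horth : ∀ (g : G) (v w : V), ⟪ρ g v, ρ g w⟫ = ⟪v, w⟫)
    (hirr : ∀ U : Submodule ℝ V, (∀ g : G, ∀ u ∈ U, ρ g u ∈ U) → U = ⊥ ∨ U = ⊤)
    (B : V →ₗ[ℝ] V →ₗ[ℝ] ℝ)
    (hsymm : ∀ x y : V, B x y = B y x)
    (hinv : ∀ (g : G) (x y : V), B (ρ g x) (ρ g y) = B x y) :
    ∃ c : ℝ, ∀ x y : V, B x y = c * ⟪x, y⟫ := by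
  obtain ⟨T, hT⟩ := B.exists_inner_apply_eq
  have hTsymm : T.IsSymmetric := fun x y ↦ by rw [hT, real_inner_comm, hT, hsymm]
  have hcomm : ∀ g, Commute T (ρ g) :=
    ρ.commute_of_inner_invariant horth fun g x y ↦ by rw [hT, hT, hinv]
  obtain ⟨μ, hμ⟩ : ∃ μ, Module.End.HasEigenvalue T μ :=
    ⟨_, hTsymm.hasEigenvalue_iSup_of_finiteDimensional⟩
  refine ⟨μ, fun x y ↦ ?_⟩
  rw [← hT, ρ.apply_eq_smul_of_commute_of_hasEigenvalue hirr hcomm hμ x, real_inner_smul_left]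
end

section
/- Let H be a group, V a finite-dimensional real inner product space carrying an orthogonal representation ρ of H, and Φ₀ ∈ V a vector with ρ(h)Φ₀ = Φ₀ for all h ∈ H. Let 𝔤 be a finite-dimensional real inner product space carrying an orthogonal representation Ad of H, and let d : 𝔤 → End(V) be a linear map satisfying ρ(h) ∘ d(X) ∘ ρ(h)⁻¹ = d(Ad(h)X) for all h ∈ H and X ∈ 𝔤. Let 𝔪_i and 𝔪_j be nonzero H-invariant subspaces of 𝔤 on which the restricted representations are irreducible, and assume that either 𝔪_i = 𝔪_j, or 𝔪_i and 𝔪_j are orthogonal and the only H-equivariant linear map from 𝔪_i to 𝔪_j is zero. Then there exist constants λ_i, λ_j ≥ 0 such that ‖d(X)Φ₀‖ = λ_i ‖X‖ for all X ∈ 𝔪_i, ‖d(Y)Φ₀‖ = λ_j ‖Y‖ for all Y ∈ 𝔪_j, and ⟪d(X)Φ₀, d(Y)Φ₀⟫ = λ_i λ_j ⟪X, Y⟫ for all X ∈ 𝔪_i and Y ∈ 𝔪_j. -/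
/-! The form `B X Y = ⟪d X Φ₀, d Y Φ₀⟫` on `𝔤` is positive semidefinite, and it is
`Ad`-invariant because `Φ₀` is fixed by the orthogonal representation `ρ`. Represent `B` on
`𝔪i × 𝔪j` by a linear map `T : 𝔪i → 𝔪j` with `⟪T X, Y⟫ = B X Y`; orthogonality of `Ad` makes
`T` equivariant. When `𝔪i = 𝔪j`, `T` is a positive operator whose eigenspaces are invariant, so
by irreducibility `T = c • id` with `c ≥ 0` (Schur), and `λ = √c`. In the orthogonal case the
hypothesis forces `T = 0`, so the cross term vanishes just like `⟪X, Y⟫`. -/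

open scoped RealInnerProductSpace

theorem exists_linearMap_inner_eq {E F : Type*} [AddCommGroup E] [Module ℝ E]
    [NormedAddCommGroup F] [InnerProductSpace ℝ F] [FiniteDimensional ℝ F]
    (B : E →ₗ[ℝ] F →ₗ[ℝ] ℝ) : ∃ T : E →ₗ[ℝ] F, ∀ x y, ⟪T x, y⟫ = B x y := by
  have hnd : LinearMap.BilinForm.Nondegenerate (innerₗ F) :=
    isSymm_inner.isRefl.nondegenerate_iff_separatingLeft.mpr fun x hx =>
      inner_self_eq_zero.mp (hx x)
  exact ⟨(LinearMap.BilinForm.toDual (innerₗ F) hnd).symm.toLinearMap ∘ₗ B, fun x y =>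
    LinearMap.BilinForm.apply_toDual_symm_apply (hB := hnd) (B x) y⟩

theorem norm_eq_sqrt_mul_norm_of_inner_self_eq {E F : Type*}
    [NormedAddCommGroup E] [InnerProductSpace ℝ E] [NormedAddCommGroup F] [InnerProductSpace ℝ F]
    {u : E} {x : F} {c : ℝ} (hc : 0 ≤ c) (h : ⟪u, u⟫ = c * ⟪x, x⟫) : ‖u‖ = √c * ‖x‖ := by
  rw [real_inner_self_eq_norm_sq, real_inner_self_eq_norm_sq] at h
  rw [← Real.sqrt_sq (norm_nonneg u), h, Real.sqrt_mul hc, Real.sqrt_sq (norm_nonneg x)]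

namespace Representation

theorem subrepresentation_irreducible {k G V : Type*} [Semiring k] [Monoid G] [AddCommMonoid V]
    [Module k V] (ρ : Representation k G V) (W : Submodule k V) (hW : ∀ g, W ≤ W.comap (ρ g))
    (hirr : ∀ U : Submodule k V, U ≤ W → (∀ g, ∀ x ∈ U, ρ g x ∈ U) → U = ⊥ ∨ U = W)
    (U : Submodule k W) (hU : ∀ g, ∀ x ∈ U, ρ.subrepresentation W hW g x ∈ U) :
    U = ⊥ ∨ U = ⊤ := by
  have hinj := Submodule.map_injective_of_injective W.injective_subtype
  refine (hirr (U.map W.subtype) (Submodule.map_subtype_le W U) ?_).imp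
    (fun h => hinj (by rwa [Submodule.map_bot]))
    (fun h => hinj (by rwa [Submodule.map_subtype_top]))
  rintro g _ ⟨x, hx, rfl⟩
  exact ⟨_, hU g x hx, rfl⟩

theorem intertwines_of_forall_inner_eq {H E F : Type*} [Group H] [AddCommGroup E] [Module ℝ E]
    [NormedAddCommGroup F] [InnerProductSpace ℝ F]
    (σ : Representation ℝ H E) (τ : Representation ℝ H F)
    (hτ : ∀ h (y y' : F), ⟪τ h y, τ h y'⟫ = ⟪y, y'⟫) {B : E →ₗ[ℝ] F →ₗ[ℝ] ℝ}
    (hB : ∀ h x y, B (σ h x) (τ h y) = B x y) {T : E →ₗ[ℝ] F} (hT : ∀ x y, ⟪T x, y⟫ = B x y)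
    (h : H) (x : E) : T (σ h x) = τ h (T x) := by
  refine ext_inner_right ℝ fun y => ?_
  calc ⟪T (σ h x), y⟫ = B (σ h x) (τ h (τ h⁻¹ y)) := by rw [hT, τ.self_inv_apply]
    _ = ⟪T x, τ h⁻¹ y⟫ := by rw [hB, hT]
    _ = ⟪τ h (T x), y⟫ := by rw [← hτ h, τ.self_inv_apply]

end Representation

theorem LinearMap.IsPositive.exists_eq_smul_of_irreducible {H E : Type*} [Monoid H]
    [NormedAddCommGroup E] [InnerProductSpace ℝ E] [FiniteDimensional ℝ E]
    (σ : Representation ℝ H E)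
    (hirr : ∀ U : Submodule ℝ E, (∀ h, ∀ x ∈ U, σ h x ∈ U) → U = ⊥ ∨ U = ⊤)
    {T : E →ₗ[ℝ] E} (hT : T.IsPositive) (hcomm : ∀ h x, T (σ h x) = σ h (T x)) :
    ∃ c : ℝ, 0 ≤ c ∧ ∀ x, T x = c • x := by
  rcases subsingleton_or_nontrivial E with hE | hE
  · exact ⟨0, le_rfl, fun x => Subsingleton.elim _ _⟩
  obtain ⟨c, hc⟩ : ∃ c, Module.End.HasEigenvalue T c :=
    ⟨_, hT.isSymmetric.hasEigenvalue_iSup_of_finiteDimensional⟩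
  have hinv : ∀ h, ∀ x ∈ Module.End.eigenspace T c, σ h x ∈ Module.End.eigenspace T c := by
    intro h x hx
    rw [Module.End.mem_eigenspace_iff] at hx ⊢
    rw [hcomm, hx, map_smul]
  have htop : Module.End.eigenspace T c = ⊤ := (hirr _ hinv).resolve_left hc
  obtain ⟨v, hv⟩ := hc.exists_hasEigenvector
  have hcv : 0 ≤ c * ⟪v, v⟫ := by
    simpa [hv.apply_eq_smul, real_inner_smul_left] using hT.inner_nonneg_left v
  refine ⟨c, nonneg_of_mul_nonneg_left hcv (real_inner_self_pos.mpr hv.2), fun x => ?_⟩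
  exact Module.End.mem_eigenspace_iff.mp (htop ▸ Submodule.mem_top)

section InvariantForm

variable {H 𝔤 : Type*} [Group H]
  [NormedAddCommGroup 𝔤] [InnerProductSpace ℝ 𝔤] [FiniteDimensional ℝ 𝔤]

theorem exists_nonneg_forall_eq_mul_inner_of_irreducible (Ad : Representation ℝ H 𝔤)
    (horthAd : ∀ h (X Y : 𝔤), ⟪Ad h X, Ad h Y⟫ = ⟪X, Y⟫)
    {B : 𝔤 →ₗ[ℝ] 𝔤 →ₗ[ℝ] ℝ} (hB : B.IsPosSemidef)
    (hBinv : ∀ h X Y, B (Ad h X) (Ad h Y) = B X Y)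
    {W : Submodule ℝ 𝔤} (hW : ∀ h, ∀ x ∈ W, Ad h x ∈ W)
    (hirr : ∀ U : Submodule ℝ 𝔤, U ≤ W → (∀ h, ∀ x ∈ U, Ad h x ∈ U) → U = ⊥ ∨ U = W) :
    ∃ c : ℝ, 0 ≤ c ∧ ∀ X ∈ W, ∀ Y ∈ W, B X Y = c * ⟪X, Y⟫ := by
  have hWc : ∀ h, W ≤ W.comap (Ad h) := fun h _ hx => hW h _ hx
  obtain ⟨T, hT⟩ := exists_linearMap_inner_eq (B.domRestrict₁₂ W W)
  have hTpos : T.IsPositive :=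
    ⟨fun x y => by rw [hT, real_inner_comm, hT]; exact (hB.isSymm.eq y x).symm,
      fun x => by simpa [hT, LinearMap.domRestrict₁₂_apply] using hB.isNonneg.nonneg x⟩
  obtain ⟨c, hc0, hc⟩ := hTpos.exists_eq_smul_of_irreducible (Ad.subrepresentation W hWc)
    (Ad.subrepresentation_irreducible W hWc hirr)
    (Representation.intertwines_of_forall_inner_eq (Ad.subrepresentation W hWc)
      (Ad.subrepresentation W hWc) (fun h x y => horthAd h x y)
      (fun h x y => hBinv h x y) hT)
  refine ⟨c, hc0, fun X hX Y hY => ?_⟩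
  calc B X Y = ⟪T ⟨X, hX⟩, ⟨Y, hY⟩⟫ := (hT ⟨X, hX⟩ ⟨Y, hY⟩).symm
    _ = c * ⟪X, Y⟫ := by rw [hc, real_inner_smul_left]; rfl

theorem eq_zero_of_forall_intertwining_eq_zero (Ad : Representation ℝ H 𝔤)
    (horthAd : ∀ h (X Y : 𝔤), ⟪Ad h X, Ad h Y⟫ = ⟪X, Y⟫)
    {B : 𝔤 →ₗ[ℝ] 𝔤 →ₗ[ℝ] ℝ} (hBinv : ∀ h X Y, B (Ad h X) (Ad h Y) = B X Y)
    {𝔪i 𝔪j : Submodule ℝ 𝔤}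
    (hinv_i : ∀ h, ∀ x ∈ 𝔪i, Ad h x ∈ 𝔪i) (hinv_j : ∀ h, ∀ x ∈ 𝔪j, Ad h x ∈ 𝔪j)
    (hzero : ∀ L : ↥𝔪i →ₗ[ℝ] ↥𝔪j,
      (∀ (h : H) (x : ↥𝔪i), (↑(L ⟨Ad h ↑x, hinv_i h ↑x x.2⟩) : 𝔤) = Ad h ↑(L x)) → L = 0)
    {X Y : 𝔤} (hX : X ∈ 𝔪i) (hY : Y ∈ 𝔪j) : B X Y = 0 := by
  obtain ⟨L, hL⟩ := exists_linearMap_inner_eq (B.domRestrict₁₂ 𝔪i 𝔪j)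
  have hL0 : L = 0 := hzero L fun h x => congrArg Subtype.val <|
    Representation.intertwines_of_forall_inner_eq
      (Ad.subrepresentation 𝔪i fun h _ hx => hinv_i h _ hx)
      (Ad.subrepresentation 𝔪j fun h _ hx => hinv_j h _ hx)
      (fun h x y => horthAd h x y) (fun h x y => hBinv h x y) hL h x
  calc B X Y = ⟪L ⟨X, hX⟩, ⟨Y, hY⟩⟫ := (hL ⟨X, hX⟩ ⟨Y, hY⟩).symm
    _ = 0 := by rw [hL0, LinearMap.zero_apply, inner_zero_left]

end InvariantForm

theorem inner_of_dPhi_eq_lambda_mul_inner_general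
    {H V 𝔤 : Type*} [Group H]
    [NormedAddCommGroup V] [InnerProductSpace ℝ V]
    [NormedAddCommGroup 𝔤] [InnerProductSpace ℝ 𝔤] [FiniteDimensional ℝ 𝔤]
    (ρ : Representation ℝ H V)
    (horthV : ∀ (h : H) (v w : V), ⟪ρ h v, ρ h w⟫ = ⟪v, w⟫)
    (Φ₀ : V) (hfix : ∀ h : H, ρ h Φ₀ = Φ₀)
    (Ad : Representation ℝ H 𝔤)
    (horthAd : ∀ (h : H) (X Y : 𝔤), ⟪Ad h X, Ad h Y⟫ = ⟪X, Y⟫)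
    (d : 𝔤 →ₗ[ℝ] (V →ₗ[ℝ] V))
    (hconj : ∀ (h : H) (X : 𝔤) (v : V), ρ h (d X (ρ h⁻¹ v)) = d (Ad h X) v)
    (𝔪i 𝔪j : Submodule ℝ 𝔤)
    (hinv_i : ∀ (h : H), ∀ x ∈ 𝔪i, Ad h x ∈ 𝔪i)
    (hinv_j : ∀ (h : H), ∀ x ∈ 𝔪j, Ad h x ∈ 𝔪j)
    (hirr_i : ∀ U : Submodule ℝ 𝔤, U ≤ 𝔪i → (∀ h : H, ∀ x ∈ U, Ad h x ∈ U) →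
      U = ⊥ ∨ U = 𝔪i)
    (hirr_j : ∀ U : Submodule ℝ 𝔤, U ≤ 𝔪j → (∀ h : H, ∀ x ∈ U, Ad h x ∈ U) →
      U = ⊥ ∨ U = 𝔪j)
    (hcase : 𝔪i = 𝔪j ∨
      ((∀ x ∈ 𝔪i, ∀ y ∈ 𝔪j, ⟪x, y⟫ = 0) ∧
       ∀ L : ↥𝔪i →ₗ[ℝ] ↥𝔪j,
         (∀ (h : H) (x : ↥𝔪i),
            (↑(L ⟨Ad h ↑x, hinv_i h ↑x x.2⟩) : 𝔤) = Ad h ↑(L x)) → L = 0)) :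
    ∃ lami lamj : ℝ, 0 ≤ lami ∧ 0 ≤ lamj ∧
      (∀ X ∈ 𝔪i, ‖d X Φ₀‖ = lami * ‖X‖) ∧
      (∀ Y ∈ 𝔪j, ‖d Y Φ₀‖ = lamj * ‖Y‖) ∧
      (∀ X ∈ 𝔪i, ∀ Y ∈ 𝔪j, ⟪d X Φ₀, d Y Φ₀⟫ = lami * lamj * ⟪X, Y⟫) := by
  set B : 𝔤 →ₗ[ℝ] 𝔤 →ₗ[ℝ] ℝ := (innerₗ V).compl₁₂ (d.flip Φ₀) (d.flip Φ₀)
  have hB : B.IsPosSemidef := ⟨⟨fun X Y => real_inner_comm _ _⟩, ⟨fun X => real_inner_self_nonneg⟩⟩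
  have hdAd : ∀ h X, d (Ad h X) Φ₀ = ρ h (d X Φ₀) := fun h X => by rw [← hconj, hfix]
  have hBinv : ∀ h X Y, B (Ad h X) (Ad h Y) = B X Y := fun h X Y => by
    change ⟪d (Ad h X) Φ₀, d (Ad h Y) Φ₀⟫ = ⟪d X Φ₀, d Y Φ₀⟫
    rw [hdAd, hdAd, horthV]
  have hnorm : ∀ {c : ℝ} {W : Submodule ℝ 𝔤}, 0 ≤ c →
      (∀ X ∈ W, ∀ Y ∈ W, B X Y = c * ⟪X, Y⟫) → ∀ X ∈ W, ‖d X Φ₀‖ = √c * ‖X‖ :=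
    fun hc hW X hX => norm_eq_sqrt_mul_norm_of_inner_self_eq hc (hW X hX X hX)
  obtain ⟨ci, hci0, hci⟩ :=
    exists_nonneg_forall_eq_mul_inner_of_irreducible Ad horthAd hB hBinv hinv_i hirr_i
  rcases hcase with rfl | ⟨horth, hzero⟩
  · refine ⟨√ci, √ci, Real.sqrt_nonneg _, Real.sqrt_nonneg _, hnorm hci0 hci, hnorm hci0 hci,
      fun X hX Y hY => ?_⟩
    rw [Real.mul_self_sqrt hci0]
    exact hci X hX Y hY
  · obtain ⟨cj, hcj0, hcj⟩ :=
      exists_nonneg_forall_eq_mul_inner_of_irreducible Ad horthAd hB hBinv hinv_j hirr_j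
    refine ⟨√ci, √cj, Real.sqrt_nonneg _, Real.sqrt_nonneg _, hnorm hci0 hci, hnorm hcj0 hcj,
      fun X hX Y hY => ?_⟩
    rw [horth X hX Y hY, mul_zero]
    exact eq_zero_of_forall_intertwining_eq_zero Ad horthAd hBinv hinv_i hinv_j hzero hX hY

/-- Theorem 1 of the paper.  With `ρ` an orthogonal representation of `H`
on `V` fixing `Φ₀`, `Ad` an orthogonal representation of `H` on `𝔤`, and `d : 𝔤 → End V`
intertwining (`ρ h ∘ d X ∘ ρ h⁻¹ = d (Ad h X)`), for irreducible invariant subspaces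
`𝔪i`, `𝔪j` that are either equal, or orthogonal with no nonzero equivariant map between
them, there are constants `λi, λj ≥ 0` with `‖d X Φ₀‖ = λi ‖X‖` on `𝔪i`,
`‖d Y Φ₀‖ = λj ‖Y‖` on `𝔪j`, and `⟪d X Φ₀, d Y Φ₀⟫ = λi λj ⟪X, Y⟫`. -/
theorem inner_of_dPhi_eq_lambda_mul_inner
    {H V 𝔤 : Type*} [Group H]
    [NormedAddCommGroup V] [InnerProductSpace ℝ V] [FiniteDimensional ℝ V]
    [NormedAddCommGroup 𝔤] [InnerProductSpace ℝ 𝔤] [FiniteDimensional ℝ 𝔤]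
    (ρ : Representation ℝ H V)
    (horthV : ∀ (h : H) (v w : V), ⟪ρ h v, ρ h w⟫ = ⟪v, w⟫)
    (Φ₀ : V) (hfix : ∀ h : H, ρ h Φ₀ = Φ₀)
    (Ad : Representation ℝ H 𝔤)
    (horthAd : ∀ (h : H) (X Y : 𝔤), ⟪Ad h X, Ad h Y⟫ = ⟪X, Y⟫)
    (d : 𝔤 →ₗ[ℝ] (V →ₗ[ℝ] V))
    (hconj : ∀ (h : H) (X : 𝔤) (v : V), ρ h (d X (ρ h⁻¹ v)) = d (Ad h X) v)
    (𝔪i 𝔪j : Submodule ℝ 𝔤)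
    (hne_i : 𝔪i ≠ ⊥) (hne_j : 𝔪j ≠ ⊥)
    (hinv_i : ∀ (h : H), ∀ x ∈ 𝔪i, Ad h x ∈ 𝔪i)
    (hinv_j : ∀ (h : H), ∀ x ∈ 𝔪j, Ad h x ∈ 𝔪j)
    (hirr_i : ∀ U : Submodule ℝ 𝔤, U ≤ 𝔪i → (∀ h : H, ∀ x ∈ U, Ad h x ∈ U) →
      U = ⊥ ∨ U = 𝔪i)
    (hirr_j : ∀ U : Submodule ℝ 𝔤, U ≤ 𝔪j → (∀ h : H, ∀ x ∈ U, Ad h x ∈ U) →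
      U = ⊥ ∨ U = 𝔪j)
    (hcase : 𝔪i = 𝔪j ∨
      ((∀ x ∈ 𝔪i, ∀ y ∈ 𝔪j, ⟪x, y⟫ = 0) ∧
       ∀ L : ↥𝔪i →ₗ[ℝ] ↥𝔪j,
         (∀ (h : H) (x : ↥𝔪i),
            (↑(L ⟨Ad h ↑x, hinv_i h ↑x x.2⟩) : 𝔤) = Ad h ↑(L x)) → L = 0)) :
    ∃ lami lamj : ℝ, 0 ≤ lami ∧ 0 ≤ lamj ∧
      (∀ X ∈ 𝔪i, ‖d X Φ₀‖ = lami * ‖X‖) ∧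
      (∀ Y ∈ 𝔪j, ‖d Y Φ₀‖ = lamj * ‖Y‖) ∧
      (∀ X ∈ 𝔪i, ∀ Y ∈ 𝔪j, ⟪d X Φ₀, d Y Φ₀⟫ = lami * lamj * ⟪X, Y⟫) :=
  inner_of_dPhi_eq_lambda_mul_inner_general ρ horthV Φ₀ hfix Ad horthAd d hconj 𝔪i 𝔪j hinv_i hinv_j
    hirr_i hirr_j hcase
end

section
/- Let 𝔤 be a finite-dimensional real Lie algebra equipped with an ad-invariant inner product, let V be a real inner product space, and let d : 𝔤 → End(V) be a Lie algebra homomorphism such that d(Z) is skew-adjoint for every Z ∈ 𝔤. Fix Φ₀ ∈ V, X ∈ 𝔤, and c ≠ 0 with d(X)(d(X)Φ₀) = −c² Φ₀, and let P be the span of {Φ₀, d(X)Φ₀}. Then the following are equivalent: (i) for every Y ∈ 𝔤 with ⟪Y, X⟫ = 0 and every Φ ∈ P, the vector d(Y)Φ is orthogonal to P; (ii) for every Y ∈ 𝔤 with ⟪Y, X⟫ = 0, ⟪d(X)Φ₀, d(Y)Φ₀⟫ = 0. -/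
open scoped RealInnerProductSpace

section SkewAdjoint

variable {V : Type*} [NormedAddCommGroup V] [InnerProductSpace ℝ V] {T : V →ₗ[ℝ] V}

theorem inner_map_self_eq_zero_of_skew (hT : ∀ v w : V, ⟪T v, w⟫ = -⟪v, T w⟫) (v : V) :
    ⟪T v, v⟫ = 0 := by
  linarith [hT v v, real_inner_comm v (T v)]

/-- The form `(v, w) ↦ ⟪T v, w⟫` is alternating, so on a plane it is determined by one value. -/
theorem inner_map_eq_zero_on_span_pair_iff (hT : ∀ v w : V, ⟪T v, w⟫ = -⟪v, T w⟫) (a b : V) :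
    (∀ v ∈ Submodule.span ℝ {a, b}, ∀ w ∈ Submodule.span ℝ {a, b}, ⟪T v, w⟫ = 0) ↔
      ⟪T a, b⟫ = 0 := by
  refine ⟨fun h ↦ h a (Submodule.mem_span_pair.2 ⟨1, 0, by simp⟩)
    b (Submodule.mem_span_pair.2 ⟨0, 1, by simp⟩), fun hab v hv w hw ↦ ?_⟩
  obtain ⟨r, s, rfl⟩ := Submodule.mem_span_pair.1 hv
  obtain ⟨r', s', rfl⟩ := Submodule.mem_span_pair.1 hw
  have hba : ⟪T b, a⟫ = 0 := by rw [hT, real_inner_comm, hab, neg_zero]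
  simp [inner_add_left, inner_add_right, real_inner_smul_left, real_inner_smul_right,
    inner_map_self_eq_zero_of_skew hT, hab, hba]

end SkewAdjoint

theorem embedded_vortex_condition_iff_conformal_general
    {𝔤 V : Type*}
    [NormedAddCommGroup 𝔤] [InnerProductSpace ℝ 𝔤]
    [NormedAddCommGroup V] [InnerProductSpace ℝ V]
    (d : 𝔤 →ₗ[ℝ] (V →ₗ[ℝ] V))
    (hskew : ∀ (Z : 𝔤) (v w : V), ⟪d Z v, w⟫ = -⟪v, d Z w⟫)
    (Φ₀ : V) (X : 𝔤)
    (P : Submodule ℝ V) (hP : P = Submodule.span ℝ {Φ₀, d X Φ₀}) :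
    (∀ Y : 𝔤, ⟪Y, X⟫ = 0 → ∀ Φ ∈ P, ∀ Ψ ∈ P, ⟪d Y Φ, Ψ⟫ = 0) ↔
      (∀ Y : 𝔤, ⟪Y, X⟫ = 0 → ⟪d X Φ₀, d Y Φ₀⟫ = 0) := by
  subst hP
  refine forall_congr' fun Y ↦ imp_congr_right fun _ ↦ ?_
  rw [inner_map_eq_zero_on_span_pair_iff (hskew Y), real_inner_comm]

/-- Let `𝔤` be a finite-dimensional real Lie algebra (bracket `bra`,
satisfying alternativity and the Leibniz/Jacobi identity) with an ad-invariant inner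
product, and `d : 𝔤 → End V` a Lie algebra homomorphism into skew-adjoint endomorphisms of
a real inner product space `V`.  For `Φ₀, X, c ≠ 0` with `d X (d X Φ₀) = −c² Φ₀` and
`P = span {Φ₀, d X Φ₀}`, the following are equivalent: (i) `d Y` maps `P` into `P^⊥` for
every `Y ⊥ X`; (ii) `⟪d X Φ₀, d Y Φ₀⟫ = 0` for every `Y ⊥ X`. -/
theorem embedded_vortex_condition_iff_conformal
    {𝔤 V : Type*}
    [NormedAddCommGroup 𝔤] [InnerProductSpace ℝ 𝔤] [FiniteDimensional ℝ 𝔤]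
    [NormedAddCommGroup V] [InnerProductSpace ℝ V]
    (bra : 𝔤 →ₗ[ℝ] 𝔤 →ₗ[ℝ] 𝔤)
    (halt : ∀ X : 𝔤, bra X X = 0)
    (hjacobi : ∀ X Y Z : 𝔤, bra X (bra Y Z) = bra (bra X Y) Z + bra Y (bra X Z))
    (hadinv : ∀ Z X Y : 𝔤, ⟪bra Z X, Y⟫ + ⟪X, bra Z Y⟫ = 0)
    (d : 𝔤 →ₗ[ℝ] (V →ₗ[ℝ] V))
    (hhom : ∀ X Y : 𝔤, d (bra X Y) = d X ∘ₗ d Y - d Y ∘ₗ d X)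
    (hskew : ∀ (Z : 𝔤) (v w : V), ⟪d Z v, w⟫ = -⟪v, d Z w⟫)
    (Φ₀ : V) (X : 𝔤) (c : ℝ) (hc : c ≠ 0)
    (hXX : d X (d X Φ₀) = -(c ^ 2) • Φ₀)
    (P : Submodule ℝ V) (hP : P = Submodule.span ℝ {Φ₀, d X Φ₀}) :
    (∀ Y : 𝔤, ⟪Y, X⟫ = 0 → ∀ Φ ∈ P, ∀ Ψ ∈ P, ⟪d Y Φ, Ψ⟫ = 0) ↔
      (∀ Y : 𝔤, ⟪Y, X⟫ = 0 → ⟪d X Φ₀, d Y Φ₀⟫ = 0) :=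
  embedded_vortex_condition_iff_conformal_general d hskew Φ₀ X P hP
end

section
/- Let 𝔤 be a finite-dimensional real Lie algebra, V a finite-dimensional real normed vector space, and d : 𝔤 → End(V) a Lie algebra homomorphism. Then for all X, Y ∈ 𝔤 and all θ ∈ ℝ, exp(θ · d(X)) ∘ d(Y) ∘ exp(−θ · d(X)) = d( exp(θ · ad X) Y ), where ad X denotes the endomorphism ⁅X, ·⁆ of 𝔤 and exp denotes the exponential of a linear endomorphism of a finite-dimensional real vector space (the convergent power series Σ Tⁿ/n!). -/
/-!
`d` intertwines `θ • ad X` with the commutator map `ad (θ • d X)` on `End V`, hence also their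
powers, so applying `d` termwise to the exponential series gives
`d (exp (θ • ad X) Y) = exp (ad (θ • d X)) (d Y)`. On a Banach algebra, `ad a = L a - R a` is a
difference of commuting left and right multiplications, and `L`, `R` send powers of `a` to
powers, so `exp (ad a) = L (exp a) ∘ R (exp (-a))`.
-/

open NormedSpace ContinuousLinearMap

section

variable {𝕂 𝔸 𝔹 F : Type*} [RCLike 𝕂]
  [NormedRing 𝔸] [NormedAlgebra 𝕂 𝔸] [CompleteSpace 𝔸]
  [NormedRing 𝔹] [NormedAlgebra 𝕂 𝔹] [CompleteSpace 𝔹]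
  [NormedAddCommGroup F] [NormedSpace 𝕂 F]

theorem ContinuousLinearMap.map_exp_eq_of_map_pow_eq (ψ : 𝔸 →L[𝕂] F) (φ : 𝔹 →L[𝕂] F)
    {x : 𝔸} {y : 𝔹} (h : ∀ n : ℕ, ψ (x ^ n) = φ (y ^ n)) : ψ (exp x) = φ (exp y) := by
  have hx := (exp_series_hasSum_exp' (𝕂 := 𝕂) x).mapL ψ
  have hy := (exp_series_hasSum_exp' (𝕂 := 𝕂) y).mapL φ
  simp only [map_smul, h] at hx hy
  exact hx.unique hy

end

section

variable (𝕂 : Type*) {𝔸 : Type*} [RCLike 𝕂] [NormedRing 𝔸] [NormedAlgebra 𝕂 𝔸]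

noncomputable def ContinuousLinearMap.ad (a : 𝔸) : 𝔸 →L[𝕂] 𝔸 :=
  mul 𝕂 𝔸 a - (mul 𝕂 𝔸).flip a

variable {𝕂}

@[simp]
theorem ContinuousLinearMap.ad_apply (a b : 𝔸) : ad 𝕂 a b = a * b - b * a := rfl

theorem ContinuousLinearMap.mul_apply_pow (a : 𝔸) (n : ℕ) :
    mul 𝕂 𝔸 (a ^ n) = mul 𝕂 𝔸 a ^ n := by
  induction n with
  | zero => ext; simp
  | succ n ih => ext; simp [pow_succ', ← ih, mul_assoc]

theorem ContinuousLinearMap.flip_mul_apply_pow (a : 𝔸) (n : ℕ) :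
    (mul 𝕂 𝔸).flip (a ^ n) = (mul 𝕂 𝔸).flip a ^ n := by
  induction n with
  | zero => ext; simp
  | succ n ih => ext; simp [pow_succ', ← ih, mul_assoc, pow_mul_comm']

variable [CompleteSpace 𝔸]

theorem ContinuousLinearMap.mul_apply_exp (a : 𝔸) : mul 𝕂 𝔸 (exp a) = exp (mul 𝕂 𝔸 a) :=
  (mul 𝕂 𝔸).map_exp_eq_of_map_pow_eq (.id 𝕂 _) (mul_apply_pow a)

theorem ContinuousLinearMap.flip_mul_apply_exp (a : 𝔸) :
    (mul 𝕂 𝔸).flip (exp a) = exp ((mul 𝕂 𝔸).flip a) :=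
  (mul 𝕂 𝔸).flip.map_exp_eq_of_map_pow_eq (.id 𝕂 _) (flip_mul_apply_pow a)

theorem ContinuousLinearMap.exp_ad_apply (a b : 𝔸) :
    exp (ad 𝕂 a) b = exp a * b * exp (-a) := by
  have hcomm : Commute (mul 𝕂 𝔸 a) (-(mul 𝕂 𝔸).flip a) := by
    refine Commute.neg_right ?_
    ext c
    simp [mul_assoc]
  have hball (T : 𝔸 →L[𝕂] 𝔸) : T ∈ Metric.eball 0 (expSeries 𝕂 (𝔸 →L[𝕂] 𝔸)).radius := by
    simp [expSeries_radius_eq_top]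
  rw [ad, sub_eq_add_neg, exp_add_of_commute_of_mem_ball hcomm (hball _) (hball _), ← map_neg,
    ← mul_apply_exp, ← flip_mul_apply_exp]
  simp [mul_assoc]

end

theorem exp_conj_d_eq_d_exp_ad_general
    {𝔤 V : Type*}
    [NormedAddCommGroup 𝔤] [NormedSpace ℝ 𝔤] [FiniteDimensional ℝ 𝔤]
    [NormedAddCommGroup V] [NormedSpace ℝ V] [FiniteDimensional ℝ V]
    (bra : 𝔤 →ₗ[ℝ] 𝔤 →ₗ[ℝ] 𝔤)
    (d : 𝔤 →ₗ[ℝ] (V →L[ℝ] V))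
    (hhom : ∀ X Y : 𝔤, d (bra X Y) = d X * d Y - d Y * d X) :
    ∀ (X Y : 𝔤) (θ : ℝ),
      exp (θ • d X) * d Y * exp (-θ • d X) =
        d (exp (θ • (bra X).toContinuousLinearMap) Y) := by
  intro X Y θ
  have hsemiconj :
      Function.Semiconj d ⇑(θ • (bra X).toContinuousLinearMap) (ad ℝ (θ • d X)) := by
    intro Z
    simp [hhom, smul_sub]
  rw [neg_smul, ← exp_ad_apply (𝕂 := ℝ)]
  refine ((d.toContinuousLinearMap.comp (apply ℝ 𝔤 Y)).map_exp_eq_of_map_pow_eq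
    (apply ℝ (V →L[ℝ] V) (d Y)) (y := ad ℝ (θ • d X)) fun n ↦ ?_).symm
  simp only [coe_comp, Function.comp_apply, apply_apply, FunLike.coe_pow_eq_iterate,
    LinearMap.coe_toContinuousLinearMap']
  exact hsemiconj.iterate_right n Y

/-- For a Lie algebra homomorphism `d : 𝔤 → End V` (with `𝔤` a
finite-dimensional real Lie algebra, bracket `bra`, and `V` a finite-dimensional real
normed space), one has `exp(θ d X) ∘ d Y ∘ exp(−θ d X) = d (exp(θ ad X) Y)` for all
`X, Y ∈ 𝔤` and `θ ∈ ℝ`, where `ad X = ⁅X, ·⁆`. -/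
theorem exp_conj_d_eq_d_exp_ad
    {𝔤 V : Type*}
    [NormedAddCommGroup 𝔤] [NormedSpace ℝ 𝔤] [FiniteDimensional ℝ 𝔤]
    [NormedAddCommGroup V] [NormedSpace ℝ V] [FiniteDimensional ℝ V]
    (bra : 𝔤 →ₗ[ℝ] 𝔤 →ₗ[ℝ] 𝔤)
    (halt : ∀ X : 𝔤, bra X X = 0)
    (hjacobi : ∀ X Y Z : 𝔤, bra X (bra Y Z) = bra (bra X Y) Z + bra Y (bra X Z))
    (d : 𝔤 →ₗ[ℝ] (V →L[ℝ] V))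
    (hhom : ∀ X Y : 𝔤, d (bra X Y) = d X * d Y - d Y * d X) :
    ∀ (X Y : 𝔤) (θ : ℝ),
      exp (θ • d X) * d Y * exp (-θ • d X) =
        d (exp (θ • (bra X).toContinuousLinearMap) Y) :=
  exp_conj_d_eq_d_exp_ad_general bra d hhom
end

section
/- Let 𝔤 be a finite-dimensional real Lie algebra equipped with an ad-invariant inner product, let V be a finite-dimensional real inner product space, and let d : 𝔤 → End(V) be a Lie algebra homomorphism such that d(Z) is skew-adjoint for every Z ∈ 𝔤. Fix Φ₀ ∈ V and X ∈ 𝔤, and suppose ⟪d(X)Φ₀, d(Y)Φ₀⟫ = 0 for every Y ∈ 𝔤 with ⟪Y, X⟫ = 0. Then for every θ ∈ ℝ, setting Φ_θ = exp(θ · d(X))Φ₀, one has ⟪d(X)Φ_θ, d(Y)Φ_θ⟫ = 0 for every Y ∈ 𝔤 with ⟪Y, X⟫ = 0. -/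
open NormedSpace
open scoped RealInnerProductSpace

/-!
Write `A = d X`, `u s = exp (s A) Φ₀` and `w s = exp ((s - θ) ad X) Y`. Since `d` intertwines
`ad X` with the commutator `[A, ·]` and `A` is skew-adjoint, `s ↦ ⟪A (u s), d (w s) (u s)⟫` has
derivative zero, so its value `⟪d X Φ_θ, d Y Φ_θ⟫` at `θ` equals its value
`⟪d X Φ₀, d (w 0) Φ₀⟫` at `0`. The latter vanishes by hypothesis, because ad-invariance and
`[X, X] = 0` put the range of `ad X` in `X⊥`, so that `exp (-θ ad X)` preserves `X⊥`.
-/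

section ExpOrbit

variable {E : Type*} [NormedAddCommGroup E] [NormedSpace ℝ E] [CompleteSpace E]

theorem hasDerivAt_exp_smul_apply (T : E →L[ℝ] E) (v : E) (t : ℝ) :
    HasDerivAt (fun s : ℝ => exp (s • T) v) (T (exp (t • T) v)) t := by
  simpa using (hasDerivAt_exp_smul_const' T t).clm_apply (hasDerivAt_const t v)

theorem apply_exp_smul_apply_of_comp_eq_zero {F : Type*} [NormedAddCommGroup F]
    [NormedSpace ℝ F] {T : E →L[ℝ] E} {ℓ : E →L[ℝ] F} (hℓT : ℓ.comp T = 0) (t : ℝ) (v : E) :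
    ℓ (exp (t • T) v) = ℓ v := by
  have hℓT_apply (x : E) : ℓ (T x) = 0 := by rw [← ContinuousLinearMap.comp_apply, hℓT]; rfl
  have hderiv (s : ℝ) : HasDerivAt (fun s : ℝ => ℓ (exp (s • T) v)) 0 s := by
    simpa only [Function.comp_def, hℓT_apply] using
      ℓ.hasFDerivAt.comp_hasDerivAt s (hasDerivAt_exp_smul_apply T v s)
  simpa using is_const_of_deriv_eq_zero (fun s => (hderiv s).differentiableAt)
    (fun s => (hderiv s).deriv) t 0

end ExpOrbit

theorem hasDerivAt_inner_apply_apply_of_commutator {V : Type*} [NormedAddCommGroup V]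
    [InnerProductSpace ℝ V] {A : V →L[ℝ] V} (hA : ∀ v w, ⟪A v, w⟫ = -⟪v, A w⟫)
    {u : ℝ → V} {M : ℝ → V →L[ℝ] V} {t : ℝ}
    (hu : HasDerivAt u (A (u t)) t) (hM : HasDerivAt M (A * M t - M t * A) t) :
    HasDerivAt (fun s => ⟪A (u s), M s (u s)⟫) 0 t := by
  refine ((A.hasFDerivAt.comp_hasDerivAt t hu).inner ℝ (hM.clm_apply hu)).congr_deriv ?_
  simp only [Function.comp_apply, sub_apply, mul_apply_eq_comp,
    sub_add_cancel, hA (A (u t)), add_neg_cancel]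

theorem vortex_orthogonality_propagates_along_orbit_general
    {𝔤 V : Type*}
    [NormedAddCommGroup 𝔤] [InnerProductSpace ℝ 𝔤] [FiniteDimensional ℝ 𝔤]
    [NormedAddCommGroup V] [InnerProductSpace ℝ V] [FiniteDimensional ℝ V]
    (bra : 𝔤 →ₗ[ℝ] 𝔤 →ₗ[ℝ] 𝔤)
    (halt : ∀ X : 𝔤, bra X X = 0)
    (hadinv : ∀ Z X Y : 𝔤, ⟪bra Z X, Y⟫ + ⟪X, bra Z Y⟫ = 0)
    (d : 𝔤 →ₗ[ℝ] (V →L[ℝ] V))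
    (hhom : ∀ X Y : 𝔤, d (bra X Y) = d X * d Y - d Y * d X)
    (hskew : ∀ (Z : 𝔤) (v w : V), ⟪d Z v, w⟫ = -⟪v, d Z w⟫)
    (Φ₀ : V) (X : 𝔤)
    (h0 : ∀ Y : 𝔤, ⟪Y, X⟫ = 0 → ⟪d X Φ₀, d Y Φ₀⟫ = 0) :
    ∀ θ : ℝ, ∀ Y : 𝔤, ⟪Y, X⟫ = 0 →
      ⟪d X (exp (θ • d X) Φ₀), d Y (exp (θ • d X) Φ₀)⟫ = 0 := by
  intro θ Y hY
  let adX : 𝔤 →L[ℝ] 𝔤 := LinearMap.toContinuousLinearMap (bra X)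
  set w : ℝ → 𝔤 := fun s => exp ((s - θ) • adX) Y
  have hw (s : ℝ) : HasDerivAt w (adX (w s)) s :=
    (hasDerivAt_exp_smul_apply adX Y (s - θ)).comp_sub_const s θ
  have hf (s : ℝ) :
      HasDerivAt (fun s => ⟪d X (exp (s • d X) Φ₀), d (w s) (exp (s • d X) Φ₀)⟫) 0 s :=
    hasDerivAt_inner_apply_apply_of_commutator (hskew X) (hasDerivAt_exp_smul_apply _ Φ₀ s)
      (((LinearMap.toContinuousLinearMap d).hasFDerivAt.comp_hasDerivAt s (hw s)).congr_deriv
        (by simp [adX, hhom]))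
  have hadX : (innerSL ℝ X).comp adX = 0 := by
    ext z
    simpa [adX, halt, real_inner_comm] using hadinv X z X
  have hw0 : ⟪w 0, X⟫ = 0 := by
    show ⟪exp ((0 - θ) • adX) Y, X⟫ = 0
    rw [real_inner_comm, ← innerSL_apply_apply ℝ, apply_exp_smul_apply_of_comp_eq_zero hadX,
      innerSL_apply_apply, real_inner_comm, hY]
  have hconst :=
    is_const_of_deriv_eq_zero (fun s => (hf s).differentiableAt) (fun s => (hf s).deriv) θ 0
  calc _ = ⟪d X Φ₀, d (w 0) Φ₀⟫ := by simpa [w] using hconst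
    _ = 0 := h0 _ hw0

/-- Let `𝔤` be a finite-dimensional real Lie algebra (bracket `bra`) with
an ad-invariant inner product, `V` a finite-dimensional real inner product space, and
`d : 𝔤 → End V` a Lie algebra homomorphism into skew-adjoint endomorphisms.  If
`⟪d X Φ₀, d Y Φ₀⟫ = 0` for all `Y ⊥ X`, then for every `θ`, with `Φ_θ = exp(θ d X) Φ₀`,
also `⟪d X Φ_θ, d Y Φ_θ⟫ = 0` for all `Y ⊥ X`. -/
theorem vortex_orthogonality_propagates_along_orbit
    {𝔤 V : Type*}
    [NormedAddCommGroup 𝔤] [InnerProductSpace ℝ 𝔤] [FiniteDimensional ℝ 𝔤]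
    [NormedAddCommGroup V] [InnerProductSpace ℝ V] [FiniteDimensional ℝ V]
    (bra : 𝔤 →ₗ[ℝ] 𝔤 →ₗ[ℝ] 𝔤)
    (halt : ∀ X : 𝔤, bra X X = 0)
    (hjacobi : ∀ X Y Z : 𝔤, bra X (bra Y Z) = bra (bra X Y) Z + bra Y (bra X Z))
    (hadinv : ∀ Z X Y : 𝔤, ⟪bra Z X, Y⟫ + ⟪X, bra Z Y⟫ = 0)
    (d : 𝔤 →ₗ[ℝ] (V →L[ℝ] V))
    (hhom : ∀ X Y : 𝔤, d (bra X Y) = d X * d Y - d Y * d X)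
    (hskew : ∀ (Z : 𝔤) (v w : V), ⟪d Z v, w⟫ = -⟪v, d Z w⟫)
    (Φ₀ : V) (X : 𝔤)
    (h0 : ∀ Y : 𝔤, ⟪Y, X⟫ = 0 → ⟪d X Φ₀, d Y Φ₀⟫ = 0) :
    ∀ θ : ℝ, ∀ Y : 𝔤, ⟪Y, X⟫ = 0 →
      ⟪d X (exp (θ • d X) Φ₀), d Y (exp (θ • d X) Φ₀)⟫ = 0 :=
  vortex_orthogonality_propagates_along_orbit_general bra halt hadinv d hhom hskew Φ₀ X h0
end

section
/- Let a, b, η be real numbers, λ ≥ 0, and let f, g : (0,∞) → ℝ be differentiable functions. Then for every c > 0, E(a, b, λ)(r ↦ f(c r), r ↦ g(c r)) = E(c·a, b, λ/c²)(f, g), where E is the radial vortex energy functional. (This is the scaling identity underlying the relation f_NO(λ, q', n; r) = f_NO(λ (q/q')², q, n; (q'/q) r) between Nielsen–Olesen profile functions at different charges.) -/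
open MeasureTheory Set

/-! Substituting `s = c r`, the measure `r dr` becomes `c⁻² s ds` and each derivative gains a
factor `c`. The `f'²` and `b²` terms are therefore invariant, while the `g'²` term picks up `c²`
and the potential term `c⁻²`; these are absorbed into `a ↦ c a` and `λ ↦ λ / c²`. -/

/-- The radial vortex energy functional
`E(a,b,λ)(f,g) = ∫₀^∞ [ a²/(4r²) g'² + η²/2 f'² + b²/(2r²) f² (1+g)² + λη⁴(f²−1)² ] r dr`,
an integral over `(0,∞)` of a nonnegative integrand (valued in `[0,∞]`). -/
noncomputable def radialVortexEnergy (η a b lam : ℝ) (f g : ℝ → ℝ) : ENNReal :=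
  ∫⁻ r in Set.Ioi (0 : ℝ),
    ENNReal.ofReal ((a ^ 2 / (4 * r ^ 2)) * (deriv g r) ^ 2
      + (η ^ 2 / 2) * (deriv f r) ^ 2
      + (b ^ 2 / (2 * r ^ 2)) * (f r) ^ 2 * (1 + g r) ^ 2
      + lam * η ^ 4 * ((f r) ^ 2 - 1) ^ 2) * ENNReal.ofReal r

theorem lintegral_comp_mul_left_Ioi (G : ℝ → ENNReal) (a : ℝ) {b : ℝ} (hb : 0 < b) :
    ∫⁻ x in Ioi a, G (b * x) = ENNReal.ofReal b⁻¹ * ∫⁻ x in Ioi (b * a), G x := by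
  have hemb : MeasurableEmbedding (b * ·) := (Homeomorph.mulLeft₀ b hb.ne').measurableEmbedding
  calc ∫⁻ x in Ioi a, G (b * x)
      = ∫⁻ x in (b * ·) ⁻¹' Ioi (b * a), G (b * x) := by
        rw [preimage_const_mul_Ioi₀ _ hb, mul_div_cancel_left₀ a hb.ne']
    _ = ∫⁻ x in Ioi (b * a), G x ∂(volume.map (b * ·)) := by
        rw [hemb.restrict_map, hemb.lintegral_map]
    _ = ENNReal.ofReal b⁻¹ * ∫⁻ x in Ioi (b * a), G x := by
        rw [Real.map_volume_mul_left hb.ne', Measure.restrict_smul, lintegral_smul_measure,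
          abs_of_pos (inv_pos.2 hb), smul_eq_mul]

noncomputable def radialVortexDensity (η a b lam : ℝ) (f g : ℝ → ℝ) (r : ℝ) : ℝ :=
  (a ^ 2 / (4 * r ^ 2)) * (deriv g r) ^ 2
    + (η ^ 2 / 2) * (deriv f r) ^ 2
    + (b ^ 2 / (2 * r ^ 2)) * (f r) ^ 2 * (1 + g r) ^ 2
    + lam * η ^ 4 * ((f r) ^ 2 - 1) ^ 2

theorem radialVortexDensity_comp_mul_left (η a b lam : ℝ) (f g : ℝ → ℝ) {c : ℝ} (hc : c ≠ 0)
    (x : ℝ) :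
    radialVortexDensity η a b lam (fun r => f (c * r)) (fun r => g (c * r)) x =
      c ^ 2 * radialVortexDensity η (c * a) b (lam / c ^ 2) f g (c * x) := by
  simp only [radialVortexDensity, deriv_comp_mul_left c f x,
    deriv_comp_mul_left c g x, smul_eq_mul]
  field_simp

noncomputable def radialVortexIntegrand (η a b lam : ℝ) (f g : ℝ → ℝ) (r : ℝ) : ENNReal :=
  ENNReal.ofReal (radialVortexDensity η a b lam f g r) * ENNReal.ofReal r

theorem radialVortexIntegrand_comp_mul_left (η a b lam : ℝ) (f g : ℝ → ℝ) {c : ℝ} (hc : 0 < c)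
    (x : ℝ) :
    radialVortexIntegrand η a b lam (fun r => f (c * r)) (fun r => g (c * r)) x =
      ENNReal.ofReal c * radialVortexIntegrand η (c * a) b (lam / c ^ 2) f g (c * x) := by
  rw [radialVortexIntegrand, radialVortexIntegrand,
    radialVortexDensity_comp_mul_left η a b lam f g hc.ne', ENNReal.ofReal_mul (sq_nonneg c),
    ENNReal.ofReal_mul hc.le, sq, ENNReal.ofReal_mul hc.le]
  ring

theorem radialVortexEnergy_scaling_general
    (a b η lam : ℝ)
    (f g : ℝ → ℝ)
    (c : ℝ) (hc : 0 < c) :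
    radialVortexEnergy η a b lam (fun r => f (c * r)) (fun r => g (c * r)) =
      radialVortexEnergy η (c * a) b (lam / c ^ 2) f g := by
  calc radialVortexEnergy η a b lam (fun r => f (c * r)) (fun r => g (c * r))
      = ∫⁻ x in Ioi 0,
          ENNReal.ofReal c * radialVortexIntegrand η (c * a) b (lam / c ^ 2) f g (c * x) :=
        lintegral_congr fun x => radialVortexIntegrand_comp_mul_left η a b lam f g hc x
    _ = ENNReal.ofReal c * (ENNReal.ofReal c⁻¹ *
          ∫⁻ s in Ioi (c * 0), radialVortexIntegrand η (c * a) b (lam / c ^ 2) f g s) := by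
        rw [lintegral_const_mul' _ _ ENNReal.ofReal_ne_top, lintegral_comp_mul_left_Ioi _ _ hc]
    _ = radialVortexEnergy η (c * a) b (lam / c ^ 2) f g := by
        rw [mul_zero, ← mul_assoc, ← ENNReal.ofReal_mul hc.le, mul_inv_cancel₀ hc.ne',
          ENNReal.ofReal_one, one_mul]
        rfl

/-- the scaling identity for Nielsen–Olesen profile functions.
For differentiable `f, g : (0,∞) → ℝ` and `c > 0`,
`E(a, b, λ)(r ↦ f(cr), r ↦ g(cr)) = E(c·a, b, λ/c²)(f, g)`. -/
theorem radialVortexEnergy_scaling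
    (a b η lam : ℝ) (hlam : 0 ≤ lam)
    (f g : ℝ → ℝ)
    (hf : ∀ r ∈ Set.Ioi (0 : ℝ), DifferentiableAt ℝ f r)
    (hg : ∀ r ∈ Set.Ioi (0 : ℝ), DifferentiableAt ℝ g r)
    (c : ℝ) (hc : 0 < c) :
    radialVortexEnergy η a b lam (fun r => f (c * r)) (fun r => g (c * r)) =
      radialVortexEnergy η (c * a) b (lam / c ^ 2) f g :=
  radialVortexEnergy_scaling_general a b η lam f g c hc
end
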